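/- Let d ≥ 1, m ≥ 0, let ρ be any d×d complex matrix and let O₁,…,O_n (n ≥ 1) be d×d complex matrices. Then Tr(ρ^{⊗m} · λ_m(O₁) · λ_m(O₂) ⋯ λ_m(O_n)) = Σ_{f : {1,…,n} → {1,…,m}} ∏_{k=1}^m Tr(ρ · ∏_{j ∈ f⁻¹(k)} O_j), where for each k the product over the fiber f⁻¹(k) is taken in increasing order of j and equals the identity matrix when the fiber is empty (so an empty fiber contributes a factor Tr ρ). -/

import Mathlib

/-!
Write `λ_m(O) = Σ_j emb_j O` and note that `emb_j O` is the elementary tensor with `O` in slot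
`j` and `1` elsewhere. Elementary tensors multiply slotwise, so
`P₁ ⊗ ⋯ ⊗ P_m · λ_m(O₁) ⋯ λ_m(O_n)` expands into a sum, over the maps `f` assigning a slot to
each `O_i`, of elementary tensors whose `k`-th slot is `P_k` times the ordered product of the
`O_i` with `f i = k`; the trace of an elementary tensor is the product of the traces of its
slots. The induction on `n` therefore runs with an arbitrary elementary tensor in place of
`ρ^{⊗m}`.
-/

open scoped BigOperators

namespace Stmt1
noncomputable section

/-- `m`-fold Kronecker tensor power of a `d × d` matrix, realized on the index type
`Fin m → Fin d`. -/
def kronPow {d : ℕ} (ρ : Matrix (Fin d) (Fin d) ℂ) (m : ℕ) :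
    Matrix (Fin m → Fin d) (Fin m → Fin d) ℂ :=
  Matrix.of fun f g => ∏ l : Fin m, ρ (f l) (g l)

/-- `O` placed in the `j`-th tensor slot, identity elsewhere. -/
def emb {d m : ℕ} (j : Fin m) (O : Matrix (Fin d) (Fin d) ℂ) :
    Matrix (Fin m → Fin d) (Fin m → Fin d) ℂ :=
  Matrix.of fun f g =>
    O (f j) (g j) * ∏ l ∈ Finset.univ.erase j, (if f l = g l then (1 : ℂ) else 0)

/-- The `m`-th degree Poisson quantization map `λ_m(O) = Σ_{j<m} emb_j O`
(in particular `λ_0(O) = 0`). -/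
def lamDeg {d : ℕ} (m : ℕ) (O : Matrix (Fin d) (Fin d) ℂ) :
    Matrix (Fin m → Fin d) (Fin m → Fin d) ℂ :=
  ∑ j : Fin m, emb j O

/-- Ordered product of the matrices `O j`, `j ∈ A`, in increasing order of the index `j`;
the empty product is the identity. -/
def orderedProd {n d : ℕ} (O : Fin n → Matrix (Fin d) (Fin d) ℂ) (A : Finset (Fin n)) :
    Matrix (Fin d) (Fin d) ℂ :=
  ((A.sort (· ≤ ·)).map O).prod

theorem _root_.Finset.sort_filter {α : Type*} [LinearOrder α] (s : Finset α) (p : α → Prop)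
    [DecidablePred p] :
    (s.filter p).sort (· ≤ ·) = (s.sort (· ≤ ·)).filter p :=
  (s.filter p).sortedLT_sort.eq_of_mem_iff
    ((s.sortedLT_sort.pairwise.filter _).sortedLT) (by simp)

def piKron {ι α R : Type*} [Fintype ι] [CommSemiring R] (P : ι → Matrix α α R) :
    Matrix (ι → α) (ι → α) R :=
  Matrix.of fun g h => ∏ k, P k (g k) (h k)

section piKron

variable {ι α R : Type*} [Fintype ι] [DecidableEq ι] [Fintype α] [CommSemiring R]

theorem piKron_mul (P Q : ι → Matrix α α R) : piKron P * piKron Q = piKron (P * Q) := by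
  ext g h
  simp only [piKron, Matrix.mul_apply, Matrix.of_apply, Pi.mul_apply, ← Finset.prod_mul_distrib]
  exact (Fintype.prod_sum fun k y => P k (g k) y * Q k y (h k)).symm

theorem trace_piKron (P : ι → Matrix α α R) : (piKron P).trace = ∏ k, (P k).trace := by
  simp only [Matrix.trace, Matrix.diag, piKron, Matrix.of_apply]
  exact (Fintype.prod_sum fun k y => P k y y).symm

end piKron

theorem kronPow_eq_piKron {d : ℕ} (ρ : Matrix (Fin d) (Fin d) ℂ) (m : ℕ) :
    kronPow ρ m = piKron fun _ => ρ :=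
  rfl

theorem emb_eq_piKron {d m : ℕ} (j : Fin m) (O : Matrix (Fin d) (Fin d) ℂ) :
    emb j O = piKron (Pi.mulSingle j O) := by
  ext g h
  rw [emb, piKron, Matrix.of_apply, Matrix.of_apply,
    ← Finset.univ.mul_prod_erase _ (Finset.mem_univ j), Pi.mulSingle_eq_same]
  congr 1
  refine Finset.prod_congr rfl fun k hk => ?_
  rw [Pi.mulSingle_eq_of_ne (Finset.ne_of_mem_erase hk), Matrix.one_apply]

theorem piKron_mul_lamDeg {d m : ℕ} (P : Fin m → Matrix (Fin d) (Fin d) ℂ)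
    (O : Matrix (Fin d) (Fin d) ℂ) :
    piKron P * lamDeg m O = ∑ j, piKron (P * Pi.mulSingle j O) := by
  simp only [lamDeg, Finset.mul_sum, emb_eq_piKron, piKron_mul]

theorem orderedProd_filter_succ {n d : ℕ} (O : Fin (n + 1) → Matrix (Fin d) (Fin d) ℂ)
    (p : Fin (n + 1) → Prop) [DecidablePred p] :
    orderedProd O (Finset.univ.filter p)
      = (if p 0 then O 0 else 1)
        * orderedProd (fun i => O i.succ) (Finset.univ.filter (p ∘ Fin.succ)) := by
  rw [orderedProd, orderedProd, Finset.sort_filter, Finset.sort_filter, Fin.sort_univ,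
    Fin.sort_univ, List.finRange_succ, List.filter_cons, List.filter_map]
  split_ifs <;> simp_all [List.map_map, Function.comp_def]

theorem orderedProd_fiber_cons {n d m : ℕ} (O : Fin (n + 1) → Matrix (Fin d) (Fin d) ℂ)
    (j k : Fin m) (f : Fin n → Fin m) :
    orderedProd O (Finset.univ.filter fun i => (Fin.cons j f : Fin (n + 1) → Fin m) i = k)
      = (Pi.mulSingle j (O 0) : Fin m → Matrix (Fin d) (Fin d) ℂ) k
        * orderedProd (fun i => O i.succ) (Finset.univ.filter fun i => f i = k) := by
  rw [orderedProd_filter_succ]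
  simp [Pi.mulSingle_apply, eq_comm]

theorem trace_piKron_mul_prod_lamDeg {d m n : ℕ} (P : Fin m → Matrix (Fin d) (Fin d) ℂ)
    (O : Fin n → Matrix (Fin d) (Fin d) ℂ) :
    (piKron P * (List.ofFn fun i => lamDeg m (O i)).prod).trace
      = ∑ f : Fin n → Fin m, ∏ k,
          (P k * orderedProd O (Finset.univ.filter fun j => f j = k)).trace := by
  induction n generalizing P with
  | zero =>
    simp [trace_piKron, orderedProd]
  | succ n ih =>
    -- split `f : Fin (n + 1) → Fin m` as `Fin.cons j f'`, `j` being the slot that receives `O 0`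
    rw [List.ofFn_succ, List.prod_cons, ← mul_assoc, piKron_mul_lamDeg, Finset.sum_mul,
      Matrix.trace_sum, ← (Fin.consEquiv fun _ => Fin m).sum_comp, Fintype.sum_prod_type]
    refine Finset.sum_congr rfl fun j _ => ?_
    simp only [ih, Pi.mul_apply, mul_assoc, Fin.consEquiv_apply, orderedProd_fiber_cons]

theorem degree_m_moment_formula_general (d m n : ℕ)
    (ρ : Matrix (Fin d) (Fin d) ℂ) (O : Fin n → Matrix (Fin d) (Fin d) ℂ) :
    (kronPow ρ m * (List.ofFn fun i => lamDeg m (O i)).prod).trace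
      = ∑ f : Fin n → Fin m, ∏ k : Fin m,
          (ρ * orderedProd O (Finset.univ.filter (fun j => f j = k))).trace := by
  rw [kronPow_eq_piKron, trace_piKron_mul_prod_lamDeg]

/-- The fixed-degree Poisson moment formula: the trace of `ρ^{⊗m} λ_m(O 1) ⋯ λ_m(O n)`
is a sum over all functions `f : Fin n → Fin m` of the product, over `k`, of
`Tr(ρ · Π_{j ∈ f⁻¹(k)} O j)` (an empty fiber contributing a factor `Tr ρ`). -/
theorem degree_m_moment_formula (d m n : ℕ) (hd : 1 ≤ d) (hn : 1 ≤ n)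
    (ρ : Matrix (Fin d) (Fin d) ℂ) (O : Fin n → Matrix (Fin d) (Fin d) ℂ) :
    (kronPow ρ m * (List.ofFn fun i => lamDeg m (O i)).prod).trace
      = ∑ f : Fin n → Fin m, ∏ k : Fin m,
          (ρ * orderedProd O (Finset.univ.filter (fun j => f j = k))).trace :=
  degree_m_moment_formula_general d m n ρ O

end
end Stmt1
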